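/- arXiv:2303.05292 — 3 statements merged into one kernel-verified Lean document; each statement's English description precedes it below -/
import Mathlib

section
/- Let k ≥ 1, m ≥ 1, and let n_0, …, n_k be non-negative integers with γ = ∑ n_j ≥ 1 and Γ = ∑ (j+1) n_j. Let p be a polynomial with p(z_0) ≠ 0 and let f be meromorphic with a zero of order l ≥ k + m at z_0. Then p·M[f]' − p'·M[f] has a zero of order at least γ·l − (Γ − γ) − 1 at z_0, where M[f] = ∏_{j=0}^{k}(f^{(j)})^{n_j}. -/
/-! Differentiation lowers the order of a zero by at most one, so `f^{(j)}` vanishes to order at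
least `l - j` at `z₀`; orders add under products, hence `M[f]` vanishes to order at least
`∑ n_j (l - j) = γ l - (Γ - γ)`. Both `p M[f]'` and `p' M[f]` then vanish to order at least one
less, and so does their difference. -/

open Finset

section Order

variable {𝕜 : Type*} [NontriviallyNormedField 𝕜]

theorem analyticOrderAt_finset_prod {ι : Type*} {s : Finset ι} {f : ι → 𝕜 → 𝕜} {x : 𝕜}
    (hf : ∀ i ∈ s, AnalyticAt 𝕜 (f i) x) :
    analyticOrderAt (fun z => ∏ i ∈ s, f i z) x = ∑ i ∈ s, analyticOrderAt (f i) x := by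
  classical
  induction s using Finset.induction_on with
  | empty => simp [analyticOrderAt_eq_zero]
  | insert a s ha ih =>
    have hs : ∀ i ∈ s, AnalyticAt 𝕜 (f i) x := fun i hi => hf i (mem_insert_of_mem hi)
    simp only [prod_insert ha, sum_insert ha]
    rw [← ih hs]
    exact analyticOrderAt_mul (hf a (mem_insert_self a s)) (Finset.analyticAt_fun_prod s hs)

variable {E : Type*} [NormedAddCommGroup E] [NormedSpace 𝕜 E] [CompleteSpace E]
  {f : 𝕜 → E} {x : 𝕜}

protected theorem AnalyticAt.iteratedDeriv (hf : AnalyticAt 𝕜 f x) (j : ℕ) :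
    AnalyticAt 𝕜 (iteratedDeriv j f) x := by
  rw [iteratedDeriv_eq_iterate]
  exact hf.iterated_deriv j

variable [CharZero 𝕜]

theorem AnalyticAt.analyticOrderAt_sub_one_le_deriv (hf : AnalyticAt 𝕜 f x) :
    analyticOrderAt f x - 1 ≤ analyticOrderAt (deriv f) x := by
  by_cases hfx : f x = 0
  · have hadd := hf.analyticOrderAt_deriv_add_one
    simp only [hfx, sub_zero] at hadd
    rw [← hadd]
    exact tsub_le_iff_right.mpr le_rfl
  · simp [(hf.analyticOrderAt_eq_zero).mpr hfx]

theorem AnalyticAt.analyticOrderAt_sub_le_iteratedDeriv (hf : AnalyticAt 𝕜 f x) (j : ℕ) :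
    analyticOrderAt f x - j ≤ analyticOrderAt (iteratedDeriv j f) x := by
  induction j with
  | zero => simp
  | succ j ih =>
    rw [iteratedDeriv_succ, Nat.cast_succ, ← tsub_tsub]
    exact (tsub_le_tsub_right ih 1).trans (hf.iteratedDeriv j).analyticOrderAt_sub_one_le_deriv

end Order

section DifferentialMonomial

variable {𝕜 : Type*} [NontriviallyNormedField 𝕜] [CompleteSpace 𝕜] {f : 𝕜 → 𝕜} {x : 𝕜}

noncomputable def differentialMonomial (k : ℕ) (n : ℕ → ℕ) (f : 𝕜 → 𝕜) : 𝕜 → 𝕜 :=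
  fun z => ∏ j ∈ range (k + 1), iteratedDeriv j f z ^ n j

protected theorem AnalyticAt.differentialMonomial (hf : AnalyticAt 𝕜 f x) (k : ℕ) (n : ℕ → ℕ) :
    AnalyticAt 𝕜 (differentialMonomial k n f) x :=
  Finset.analyticAt_fun_prod _ fun j _ => (hf.iteratedDeriv j).pow (n j)

theorem AnalyticAt.analyticOrderAt_sub_one_le_mul_deriv_sub_mul [CharZero 𝕜] {a b M : 𝕜 → 𝕜}
    (ha : AnalyticAt 𝕜 a x) (hb : AnalyticAt 𝕜 b x) (hM : AnalyticAt 𝕜 M x) :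
    analyticOrderAt M x - 1 ≤ analyticOrderAt (fun z => a z * deriv M z - b z * M z) x := by
  refine le_trans ?_ (le_analyticOrderAt_sub (f := a * deriv M) (g := b * M) (z₀ := x))
  rw [analyticOrderAt_mul ha hM.deriv, analyticOrderAt_mul hb hM]
  exact le_min (hM.analyticOrderAt_sub_one_le_deriv.trans le_add_self)
    (tsub_le_self.trans le_add_self)

theorem AnalyticAt.sum_le_analyticOrderAt_differentialMonomial [CharZero 𝕜]
    (hf : AnalyticAt 𝕜 f x) (k : ℕ) (n : ℕ → ℕ) :
    ∑ j ∈ range (k + 1), n j • (analyticOrderAt f x - j) ≤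
      analyticOrderAt (differentialMonomial k n f) x := by
  unfold differentialMonomial
  rw [analyticOrderAt_finset_prod (f := fun j z => iteratedDeriv j f z ^ n j)
    fun j _ => (hf.iteratedDeriv j).pow (n j)]
  gcongr with j
  exact (nsmul_le_nsmul_right (hf.analyticOrderAt_sub_le_iteratedDeriv j) _).trans_eq
    (analyticOrderAt_pow (hf.iteratedDeriv j) (n j)).symm

end DifferentialMonomial

theorem sum_mul_sub_sum_le_sum_mul_sub (s : Finset ℕ) (a : ℕ → ℕ) (l : ℕ) :
    (∑ j ∈ s, a j) * l - ∑ j ∈ s, j * a j ≤ ∑ j ∈ s, a j * (l - j) := by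
  rw [tsub_le_iff_right, sum_mul, ← sum_add_distrib]
  gcongr with j
  calc a j * l ≤ a j * (l - j + j) := Nat.mul_le_mul_left _ le_tsub_add
    _ = a j * (l - j) + j * a j := by ring

theorem stmt_8_general (k : ℕ) (n : ℕ → ℕ)
    (γ Γ : ℕ)
    (hγ : γ = ∑ j ∈ Finset.range (k + 1), n j)
    (hΓ : Γ = ∑ j ∈ Finset.range (k + 1), (j + 1) * n j)
    (p : Polynomial ℂ) (z₀ : ℂ)
    (f : ℂ → ℂ) (l : ℕ)
    (hf : AnalyticAt ℂ f z₀) (hord : analyticOrderAt f z₀ = (l : ℕ∞))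
    (M : ℂ → ℂ)
    (hM : M = fun z => ∏ j ∈ Finset.range (k + 1), (iteratedDeriv j f z) ^ (n j)) :
    ∃ hW : AnalyticAt ℂ
        (fun z => p.eval z * deriv M z - (p.derivative).eval z * M z) z₀,
      ((γ * l - (Γ - γ) - 1 : ℕ) : ℕ∞) ≤ analyticOrderAt
        (fun z => p.eval z * deriv M z - (p.derivative).eval z * M z) z₀ := by
  have hpoly : ∀ q : Polynomial ℂ, AnalyticAt ℂ (fun z => q.eval z) z₀ :=
    fun q => AnalyticOnNhd.eval_polynomial q z₀ trivial
  have hMan : AnalyticAt ℂ M z₀ := hM ▸ hf.differentialMonomial k n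
  refine ⟨((hpoly p).mul hMan.deriv).sub ((hpoly _).mul hMan), ?_⟩
  have hΓγ : Γ = ∑ j ∈ range (k + 1), j * n j + γ := by
    rw [hΓ, hγ, ← sum_add_distrib]
    exact sum_congr rfl fun j _ => by ring
  calc ((γ * l - (Γ - γ) - 1 : ℕ) : ℕ∞)
      ≤ ((∑ j ∈ range (k + 1), n j * (l - j) - 1 : ℕ) : ℕ∞) := by
        rw [show Γ - γ = ∑ j ∈ range (k + 1), j * n j by omega, hγ]
        gcongr
        exact sum_mul_sub_sum_le_sum_mul_sub _ n l
    _ = (∑ j ∈ range (k + 1), n j • (analyticOrderAt f z₀ - j)) - 1 := by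
        simp [hord]
    _ ≤ analyticOrderAt M z₀ - 1 := by
        gcongr
        exact hM ▸ hf.sum_le_analyticOrderAt_differentialMonomial k n
    _ ≤ _ := AnalyticAt.analyticOrderAt_sub_one_le_mul_deriv_sub_mul (hpoly p) (hpoly _) hMan

/-- If `f` has a zero of order `l ≥ k + m` at `z₀` and `p` is a polynomial with
`p(z₀) ≠ 0`, then `p·M[f]' - p'·M[f]` has a zero of order at least
`γ·l - (Γ - γ) - 1` at `z₀`, where `M[f] = ∏_{j=0}^{k} (f^{(j)})^{n_j}`. -/
theorem stmt_8 (k m : ℕ) (hk : 1 ≤ k) (hm : 1 ≤ m) (n : ℕ → ℕ)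
    (γ Γ : ℕ)
    (hγ : γ = ∑ j ∈ Finset.range (k + 1), n j) (hγ1 : 1 ≤ γ)
    (hΓ : Γ = ∑ j ∈ Finset.range (k + 1), (j + 1) * n j)
    (p : Polynomial ℂ) (z₀ : ℂ) (hp : p.eval z₀ ≠ 0)
    (f : ℂ → ℂ) (l : ℕ) (hl : k + m ≤ l)
    (hf : AnalyticAt ℂ f z₀) (hord : analyticOrderAt f z₀ = (l : ℕ∞))
    (M : ℂ → ℂ)
    (hM : M = fun z => ∏ j ∈ Finset.range (k + 1), (iteratedDeriv j f z) ^ (n j)) :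
    ∃ hW : AnalyticAt ℂ
        (fun z => p.eval z * deriv M z - (p.derivative).eval z * M z) z₀,
      ((γ * l - (Γ - γ) - 1 : ℕ) : ℕ∞) ≤ analyticOrderAt
        (fun z => p.eval z * deriv M z - (p.derivative).eval z * M z) z₀ :=
  stmt_8_general k n γ Γ hγ hΓ p z₀ f l hf hord M hM
end

section
/- Let f(z) = A/∏_{i=1}^{t}(z + z_i)^{t_i} be a rational function with A ≠ 0, distinct z_1, …, z_t, and positive integers t_i, and let M[f] = ∏_{j=0}^{k}(f^{(j)})^{n_j} with non-negative integers n_j, γ = ∑ n_j ≥ 1, Γ = ∑ (j+1) n_j. Then M[f](z) = g(z)/∏_{i=1}^{t}(z + z_i)^{(t_i−1)γ + Γ}, where g is a polynomial of degree at most (t−1)(Γ − γ) with g(−z_i) ≠ 0 for each i. -/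
/-!
Write `D_e = ∏ (X + aᵢ)^{eᵢ}` and `L = ∏ (X + aᵢ)`. Since `D_e' · L = R_e · D_e` with
`R_e = ∑ eᵢ ∏_{l ≠ i} (X + a_l)`, the derivative of `P / D_e` is `(P' L - P R_e) / D_{e+1}`.
Iterating from `f = A / D_e` gives `f^{(j)} = P_j / D_{e+j}` with `deg P_j ≤ j (t - 1)`.
At `-aᵢ` the term `P' L` vanishes while `R_e(-aᵢ) = eᵢ ∏_{l ≠ i} (a_l - aᵢ) ≠ 0`, so
`P_j(-aᵢ) ≠ 0` by induction. Multiplying the powers `(f^{(j)})^{n_j}` adds up the degrees and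
the pole orders.
-/

open Polynomial Finset

theorem natDegree_X_add_C_le {R : Type*} [Semiring R] (c : R) : (X + C c).natDegree ≤ 1 :=
  natDegree_add_C.trans_le natDegree_X_le

section Polynomials

variable {R ι : Type*} [CommRing R] [Fintype ι] [DecidableEq ι]

noncomputable def linearFactorProd (a : ι → R) : R[X] := ∏ i, (X + C (a i))

noncomputable def logDerivNumerator (a : ι → R) (e : ι → ℕ) : R[X] :=
  ∑ i, C (e i : R) * ∏ l ∈ univ.erase i, (X + C (a l))

noncomputable def derivNumerator (a : ι → R) (e : ι → ℕ) (P : R[X]) : R[X] :=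
  derivative P * linearFactorProd a - P * logDerivNumerator a e

noncomputable def iteratedDerivNumerator (a : ι → R) (e : ι → ℕ) (P : R[X]) : ℕ → R[X]
  | 0 => P
  | j + 1 => derivNumerator a (fun i => e i + j) (iteratedDerivNumerator a e P j)

theorem derivative_prod_pow_mul_linearFactorProd (a : ι → R) (e : ι → ℕ) :
    derivative (∏ i, (X + C (a i)) ^ e i) * linearFactorProd a =
      logDerivNumerator a e * ∏ i, (X + C (a i)) ^ e i := by
  rw [derivative_prod_finset, linearFactorProd, logDerivNumerator, sum_mul, sum_mul]
  refine sum_congr rfl fun i hi => ?_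
  rw [← mul_prod_erase univ (fun l => X + C (a l)) hi,
    ← mul_prod_erase univ (fun l => (X + C (a l)) ^ e l) hi, derivative_X_add_C_pow]
  cases e i with
  | zero => simp
  | succ m => rw [Nat.add_sub_cancel, pow_succ]; push_cast; ring

omit [DecidableEq ι] in
theorem eval_linearFactorProd_neg (a : ι → R) (i : ι) :
    (linearFactorProd a).eval (-a i) = 0 := by
  rw [linearFactorProd, eval_prod]
  exact prod_eq_zero (mem_univ i) (by simp)

theorem eval_logDerivNumerator_neg (a : ι → R) (e : ι → ℕ) (i : ι) :
    (logDerivNumerator a e).eval (-a i) = e i * ∏ l ∈ univ.erase i, (a l - a i) := by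
  rw [logDerivNumerator, eval_finsetSum, sum_eq_single i]
  · simp [eval_prod, neg_add_eq_sub]
  · intro m _ hmi
    rw [eval_mul, eval_prod, prod_eq_zero (mem_erase.mpr ⟨Ne.symm hmi, mem_univ i⟩) (by simp),
      mul_zero]
  · simp

theorem eval_derivNumerator_neg (a : ι → R) (e : ι → ℕ) (P : R[X]) (i : ι) :
    (derivNumerator a e P).eval (-a i) =
      -(P.eval (-a i) * (e i * ∏ l ∈ univ.erase i, (a l - a i))) := by
  simp only [derivNumerator, eval_sub, eval_mul, eval_linearFactorProd_neg,
    eval_logDerivNumerator_neg, mul_zero, zero_sub]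

theorem eval_iteratedDerivNumerator_ne_zero [IsDomain R] [CharZero R] {a : ι → R}
    (ha : Function.Injective a) {e : ι → ℕ} (he : ∀ i, e i ≠ 0) {P : R[X]}
    (hP : ∀ i, P.eval (-a i) ≠ 0) (j : ℕ) (i : ι) :
    (iteratedDerivNumerator a e P j).eval (-a i) ≠ 0 := by
  induction j with
  | zero => exact hP i
  | succ j ih =>
    rw [iteratedDerivNumerator, eval_derivNumerator_neg, neg_ne_zero]
    refine mul_ne_zero ih (mul_ne_zero (Nat.cast_ne_zero.mpr (by simp [he i])) ?_)
    exact prod_ne_zero_iff.mpr fun l hl => sub_ne_zero.mpr (ha.ne (ne_of_mem_erase hl))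

omit [DecidableEq ι] in
theorem natDegree_linearFactorProd_le (a : ι → R) :
    (linearFactorProd a).natDegree ≤ Fintype.card ι :=
  (natDegree_prod_le _ _).trans <| (sum_le_sum fun _ _ => natDegree_X_add_C_le _).trans (by simp)

theorem natDegree_logDerivNumerator_le (a : ι → R) (e : ι → ℕ) :
    (logDerivNumerator a e).natDegree ≤ Fintype.card ι - 1 := by
  refine natDegree_sum_le_of_forall_le _ _ fun i _ => (natDegree_C_mul_le _ _).trans ?_
  refine (natDegree_prod_le _ _).trans <| (sum_le_sum fun _ _ => natDegree_X_add_C_le _).trans ?_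
  simp [card_erase_of_mem]

theorem natDegree_derivNumerator_le (a : ι → R) (e : ι → ℕ) {P : R[X]} {m : ℕ}
    (hP : P.natDegree ≤ m) :
    (derivNumerator a e P).natDegree ≤ m + (Fintype.card ι - 1) := by
  have hQ := natDegree_linearFactorProd_le a
  have hR := natDegree_logDerivNumerator_le a e
  refine (natDegree_sub_le _ _).trans (max_le ?_ (natDegree_mul_le.trans (by omega)))
  by_cases hd : derivative P = 0
  · simp [hd]
  · have hP1 : P.natDegree ≠ 0 := fun h => hd (derivative_of_natDegree_zero h)
    have := natDegree_derivative_le P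
    exact natDegree_mul_le.trans (by omega)

theorem natDegree_iteratedDerivNumerator_le (a : ι → R) (e : ι → ℕ) (P : R[X]) (j : ℕ) :
    (iteratedDerivNumerator a e P j).natDegree ≤ P.natDegree + j * (Fintype.card ι - 1) := by
  induction j with
  | zero => simp [iteratedDerivNumerator]
  | succ j ih =>
    rw [add_mul, one_mul, ← add_assoc]
    exact natDegree_derivNumerator_le _ _ ih

end Polynomials

section Derivatives

variable {𝕜 ι : Type*} [NontriviallyNormedField 𝕜] [Fintype ι] [DecidableEq ι]

theorem deriv_eq_derivNumerator_div {a : ι → 𝕜} {e : ι → ℕ} {P : 𝕜[X]} {g : 𝕜 → 𝕜}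
    (hg : ∀ w, (∀ i, w ≠ -a i) → g w = P.eval w / ∏ i, (w + a i) ^ e i)
    {z : 𝕜} (hz : ∀ i, z ≠ -a i) :
    deriv g z = (derivNumerator a e P).eval z / ∏ i, (z + a i) ^ (e i + 1) := by
  set D : 𝕜[X] := ∏ i, (X + C (a i)) ^ e i
  have hD : ∀ w, D.eval w = ∏ i, (w + a i) ^ e i := fun w => by simp [D, eval_prod]
  have hL : (linearFactorProd a).eval z = ∏ i, (z + a i) := by simp [linearFactorProd, eval_prod]
  have hzi : ∀ i, z + a i ≠ 0 := fun i h => hz i (eq_neg_of_add_eq_zero_left h)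
  have hDz : D.eval z ≠ 0 := by
    rw [hD]; exact prod_ne_zero_iff.mpr fun i _ => pow_ne_zero _ (hzi i)
  have hLz : (linearFactorProd a).eval z ≠ 0 := by
    rw [hL]; exact prod_ne_zero_iff.mpr fun i _ => hzi i
  have hOpen : IsOpen {w : 𝕜 | ∀ i, w ≠ -a i} := by
    simpa only [Set.ofPred_forall] using isOpen_iInter_of_finite fun i => isOpen_ne
  have hg_eq : g =ᶠ[nhds z] fun w => P.eval w / D.eval w := by
    filter_upwards [hOpen.mem_nhds hz] with w hw
    rw [hg w hw, hD]
  have hlog := congrArg (eval z) (derivative_prod_pow_mul_linearFactorProd a e)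
  simp only [eval_mul] at hlog
  have hden : ∏ i, (z + a i) ^ (e i + 1) = D.eval z * (linearFactorProd a).eval z := by
    rw [hD, hL, ← prod_mul_distrib]
    simp only [pow_succ]
  rw [hg_eq.deriv_eq, deriv_fun_div P.differentiableAt D.differentiableAt hDz, Polynomial.deriv,
    Polynomial.deriv, hden, derivNumerator, eval_sub, eval_mul, eval_mul,
    div_eq_div_iff (pow_ne_zero 2 hDz) (mul_ne_zero hDz hLz)]
  linear_combination (-(P.eval z * D.eval z)) * hlog

theorem iteratedDeriv_eq_iteratedDerivNumerator_div {a : ι → 𝕜} {e : ι → ℕ} {P : 𝕜[X]}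
    {f : 𝕜 → 𝕜} (hf : ∀ w, (∀ i, w ≠ -a i) → f w = P.eval w / ∏ i, (w + a i) ^ e i)
    (j : ℕ) : ∀ z, (∀ i, z ≠ -a i) →
      iteratedDeriv j f z =
        (iteratedDerivNumerator a e P j).eval z / ∏ i, (z + a i) ^ (e i + j) := by
  induction j with
  | zero => simpa [iteratedDerivNumerator] using hf
  | succ j ih =>
    intro z hz
    rw [iteratedDeriv_succ]
    exact deriv_eq_derivNumerator_div ih hz

end Derivatives

theorem natDegree_prod_iteratedDerivNumerator_pow_le {R ι : Type*} [CommRing R] [Fintype ι]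
    [DecidableEq ι] (a : ι → R) (e : ι → ℕ) (c : R) (s : Finset ℕ) (n : ℕ → ℕ) :
    (∏ j ∈ s, iteratedDerivNumerator a e (C c) j ^ n j).natDegree ≤
      (Fintype.card ι - 1) * ∑ j ∈ s, j * n j := by
  refine (natDegree_prod_le _ _).trans <| (sum_le_sum fun j _ => natDegree_pow_le.trans <|
    Nat.mul_le_mul_left _ (natDegree_iteratedDerivNumerator_le a e (C c) j)).trans ?_
  rw [mul_sum]
  exact sum_le_sum fun j _ => le_of_eq (by rw [natDegree_C]; ring)

theorem prod_div_prod_pow_pow {K ι κ : Type*} [DivisionCommMonoid K] [Fintype ι] (s : Finset κ)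
    (p : κ → K) (x : ι → K) (d : ι → κ → ℕ) (n : κ → ℕ) :
    ∏ j ∈ s, (p j / ∏ i, x i ^ d i j) ^ n j =
      (∏ j ∈ s, p j ^ n j) / ∏ i, x i ^ ∑ j ∈ s, d i j * n j := by
  simp_rw [div_pow, prod_div_distrib, ← prod_pow, ← pow_mul]
  rw [prod_comm]
  simp_rw [prod_pow_eq_pow_sum]

theorem sum_mul_eq_sum_succ_mul_sub_sum (s : Finset ℕ) (n : ℕ → ℕ) :
    ∑ j ∈ s, j * n j = ∑ j ∈ s, (j + 1) * n j - ∑ j ∈ s, n j := by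
  simp [add_mul, sum_add_distrib]

theorem sum_add_mul_eq {e : ℕ} (he : e ≠ 0) (s : Finset ℕ) (n : ℕ → ℕ) :
    ∑ j ∈ s, (e + j) * n j = (e - 1) * ∑ j ∈ s, n j + ∑ j ∈ s, (j + 1) * n j := by
  obtain ⟨m, rfl⟩ := Nat.exists_eq_add_one_of_ne_zero he
  rw [Nat.add_sub_cancel, mul_sum, ← sum_add_distrib]
  exact sum_congr rfl fun j _ => by ring

theorem stmt_16_general (k : ℕ) (n : ℕ → ℕ)
    (γ Γ : ℕ)
    (hγ : γ = ∑ j ∈ Finset.range (k + 1), n j)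
    (hΓ : Γ = ∑ j ∈ Finset.range (k + 1), (j + 1) * n j)
    (t : ℕ) (A : ℂ) (hA : A ≠ 0)
    (zp : Fin t → ℂ) (hzp : Function.Injective zp)
    (tp : Fin t → ℕ) (htp : ∀ i, 1 ≤ tp i)
    (f : ℂ → ℂ)
    (hf : ∀ z : ℂ, (∀ i, z ≠ -zp i) →
      f z = A / ∏ i, (z + zp i) ^ (tp i)) :
    ∃ g : Polynomial ℂ,
      g.degree ≤ ((t - 1) * (Γ - γ) : ℕ) ∧
      (∀ i, g.eval (-zp i) ≠ 0) ∧
      ∀ z : ℂ, (∀ i, z ≠ -zp i) →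
        ∏ j ∈ Finset.range (k + 1), (iteratedDeriv j f z) ^ (n j) =
          g.eval z / ∏ i, (z + zp i) ^ ((tp i - 1) * γ + Γ) := by
  have htp₀ : ∀ i, tp i ≠ 0 := fun i => Nat.one_le_iff_ne_zero.mp (htp i)
  have hf' : ∀ z, (∀ i, z ≠ -zp i) → f z = (C A).eval z / ∏ i, (z + zp i) ^ tp i := by
    simpa only [eval_C] using hf
  refine ⟨∏ j ∈ range (k + 1), iteratedDerivNumerator zp tp (C A) j ^ n j, ?_, ?_, ?_⟩
  · refine degree_le_natDegree.trans (WithBot.coe_le_coe.mpr ?_)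
    simpa [hγ, hΓ, ← sum_mul_eq_sum_succ_mul_sub_sum] using
      natDegree_prod_iteratedDerivNumerator_pow_le zp tp A (range (k + 1)) n
  · intro i
    simp only [eval_prod, eval_pow]
    exact prod_ne_zero_iff.mpr fun j _ => pow_ne_zero _ <|
      eval_iteratedDerivNumerator_ne_zero hzp htp₀ (fun _ => by rwa [eval_C]) j i
  · intro z hz
    simp_rw [iteratedDeriv_eq_iteratedDerivNumerator_div hf' _ z hz, prod_div_prod_pow_pow,
      eval_prod, eval_pow, sum_add_mul_eq (htp₀ _), hγ, hΓ]

/-- Structural form of the differential monomial of the non-vanishing rational function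
`f(z) = A / ∏ᵢ (z + zᵢ)^{tᵢ}`: there is a polynomial `g` of degree at most
`(t-1)(Γ-γ)`, nonvanishing at each `-zᵢ`, with
`M[f](z) = g(z) / ∏ᵢ (z + zᵢ)^{(tᵢ-1)γ + Γ}` away from the poles. -/
theorem stmt_16 (k : ℕ) (hk : 1 ≤ k) (n : ℕ → ℕ)
    (γ Γ : ℕ)
    (hγ : γ = ∑ j ∈ Finset.range (k + 1), n j) (hγ1 : 1 ≤ γ)
    (hΓ : Γ = ∑ j ∈ Finset.range (k + 1), (j + 1) * n j)
    (t : ℕ) (ht : 1 ≤ t) (A : ℂ) (hA : A ≠ 0)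
    (zp : Fin t → ℂ) (hzp : Function.Injective zp)
    (tp : Fin t → ℕ) (htp : ∀ i, 1 ≤ tp i)
    (f : ℂ → ℂ)
    (hf : ∀ z : ℂ, (∀ i, z ≠ -zp i) →
      f z = A / ∏ i, (z + zp i) ^ (tp i)) :
    ∃ g : Polynomial ℂ,
      g.degree ≤ ((t - 1) * (Γ - γ) : ℕ) ∧
      (∀ i, g.eval (-zp i) ≠ 0) ∧
      ∀ z : ℂ, (∀ i, z ≠ -zp i) →
        ∏ j ∈ Finset.range (k + 1), (iteratedDeriv j f z) ^ (n j) =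
          g.eval z / ∏ i, (z + zp i) ^ ((tp i - 1) * γ + Γ) :=
  stmt_16_general k n γ Γ hγ hΓ t A hA zp hzp tp htp f hf
end

section
/- Let f be a non-constant, non-vanishing rational function on ℂ (so f has at least one pole) and let p be a polynomial, p ≢ 0. Let M[f] = ∏_{j=0}^{k}(f^{(j)})^{n_j} with k ≥ 1 and non-negative integers n_j, ∑_{j=0}^{k} n_j ≥ 1, and weight Γ_M = ∑_{j=0}^{k}(j+1)n_j. Then the function M[f] − p has at least Γ_M distinct zeros in ℂ. -/
/-!
Since `f` has no zeros, its numerator is a nonzero constant `c`, so `f = c / q` with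
`d = deg q ≥ 1`. Inductively `f⁽ʲ⁾ = Aⱼ / q ^ (j + 1)` with `deg Aⱼ = j (d - 1)` exactly, so
`M[f] = B / q ^ Γ` with `deg B = J (d - 1)`, where `J = ∑ j nⱼ` and `Γ = J + ∑ nⱼ`.
Away from the roots of `q`, the zeros of `M[f] - P` are the roots of `B - P q ^ Γ`. Cancelling
`g = gcd(B, P q ^ Γ)` and applying the Mason–Stothers theorem to the coprime pair
`P q ^ Γ / g`, `B / g` and their difference gives
`Γ d < #zeros + #roots(q) + deg B ≤ #zeros + d + J (d - 1)`, i.e. `#zeros ≥ Γ + (∑ nⱼ - 1)(d - 1)`.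
-/

open Polynomial UniqueFactorizationMonoid

namespace Polynomial

section RootCount

theorem setOf_eval_eq_mul_eq_roots_sdiff {R : Type*} [CommRing R] [IsDomain R] [DecidableEq R]
    {N Q P : R[X]} (hR : N - P * Q ≠ 0) (hQ : Q ≠ 0) :
    {z | Q.eval z ≠ 0 ∧ N.eval z = P.eval z * Q.eval z} =
      ↑((N - P * Q).roots.toFinset \ Q.roots.toFinset) := by
  ext z
  simp [mem_roots hR, mem_roots hQ, sub_eq_zero, and_comm]

variable {k : Type*} [Field k] [IsAlgClosed k]

theorem exists_eq_C_of_forall_eval_ne_zero {p : k[X]} (hp : ∀ z, p.eval z ≠ 0) :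
    ∃ c, c ≠ 0 ∧ p = C c := by
  refine ⟨p.coeff 0, by simpa [coeff_zero_eq_eval_zero] using hp 0,
    IsAlgClosed.roots_eq_zero_iff.mp (Multiset.eq_zero_of_forall_notMem fun z hz => ?_)⟩
  exact hp z (mem_roots'.mp hz).2

theorem natDegree_radical_le_card_roots_toFinset [DecidableEq k] {w : k[X]} (hw : w ≠ 0) :
    (radical w).natDegree ≤ w.roots.toFinset.card := by
  have hsep : (radical w).Separable :=
    PerfectField.separable_iff_squarefree.mpr squarefree_radical
  calc (radical w).natDegree = (radical w).roots.toFinset.card := by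
        rw [Multiset.toFinset_card_of_nodup (nodup_roots hsep),
          IsAlgClosed.card_roots_eq_natDegree]
    _ ≤ w.roots.toFinset.card :=
        Finset.card_le_card (Multiset.toFinset_subset.mpr
          (Multiset.subset_of_le (roots.le_of_dvd hw radical_dvd_self)))

variable [CharZero k] [DecidableEq k]

theorem natDegree_lt_card_roots_mul_mul_sub {b c : k[X]} (hb : b ≠ 0) (hc : c ≠ 0)
    (hcb : c ≠ b) (hbc : IsCoprime b c) (hb₀ : 0 < b.natDegree) :
    b.natDegree < (b * c * (c - b)).roots.toFinset.card := by
  have hw : b * c * (c - b) ≠ 0 := mul_ne_zero (mul_ne_zero hb hc) (sub_ne_zero.mpr hcb)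
  rcases Polynomial.abc hb (neg_ne_zero.mpr hc) (sub_ne_zero.mpr hcb) hbc.neg_right
      (by ring) with ⟨hrad, -, -⟩ | ⟨hb', -, -⟩
  · rw [mul_neg, neg_mul, UniqueFactorizationDomain.radical_neg] at hrad
    exact hrad.trans (natDegree_radical_le_card_roots_toFinset hw)
  · exact absurd (derivative_eq_zero.mp hb') hb₀.ne'

theorem natDegree_lt_ncard_eval_eq_mul_add {N Q P : k[X]} (hN : N ≠ 0) (hP : P ≠ 0)
    (hNQ : N.natDegree < Q.natDegree) :
    Q.natDegree < {z | Q.eval z ≠ 0 ∧ N.eval z = P.eval z * Q.eval z}.ncard +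
      Q.roots.toFinset.card + N.natDegree := by
  have hQ : Q ≠ 0 := ne_zero_of_natDegree_gt hNQ
  have hR : N - P * Q ≠ 0 := by
    refine sub_ne_zero.mpr fun h => ?_
    have := natDegree_mul hP hQ
    rw [← h] at this
    omega
  obtain ⟨c, b, hc, hb, hcop⟩ := extract_gcd N (P * Q)
  generalize gcd N (P * Q) = g at hc hb
  have hg : g ≠ 0 := left_ne_zero_of_mul (hc ▸ hN)
  have hc0 : c ≠ 0 := right_ne_zero_of_mul (hc ▸ hN)
  have hb0 : b ≠ 0 := right_ne_zero_of_mul (hb ▸ mul_ne_zero hP hQ)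
  have hRgcb : N - P * Q = g * (c - b) := by rw [hc, hb, mul_sub]
  have hcb : c ≠ b := fun h => hR (by rw [hRgcb, h, sub_self, mul_zero])
  have hdeg_c : g.natDegree + c.natDegree = N.natDegree := by rw [hc, natDegree_mul hg hc0]
  have hdeg_b : g.natDegree + b.natDegree = P.natDegree + Q.natDegree := by
    rw [← natDegree_mul hg hb0, ← hb, natDegree_mul hP hQ]
  have hmason := natDegree_lt_card_roots_mul_mul_sub hb0 hc0 hcb
    ((gcd_isUnit_iff c b).mp hcop).symm (by omega)
  have hsub : (b * c * (c - b)).roots.toFinset ⊆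
      ((N - P * Q).roots.toFinset ∪ Q.roots.toFinset) ∪ P.roots.toFinset ∪ c.roots.toFinset := by
    intro z hz
    have hw : b * c * (c - b) ≠ 0 := mul_ne_zero (mul_ne_zero hb0 hc0) (sub_ne_zero.mpr hcb)
    simp only [Multiset.mem_toFinset, mem_roots hw, mem_roots hR, mem_roots hQ, mem_roots hP,
      mem_roots hc0, Finset.mem_union, IsRoot.def, eval_mul, eval_sub, mul_eq_zero,
      sub_eq_zero] at hz ⊢
    have hNz : N.eval z = g.eval z * c.eval z := by rw [hc, eval_mul]
    have hPQz : P.eval z * Q.eval z = g.eval z * b.eval z := by rw [← eval_mul, hb, eval_mul]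
    rcases hz with (hbz | hcz) | hcbz
    · rw [hbz, mul_zero, mul_eq_zero] at hPQz
      rcases hPQz with hPz | hQz
      · exact Or.inl (Or.inr hPz)
      · exact Or.inl (Or.inl (Or.inr hQz))
    · exact Or.inr hcz
    · exact Or.inl (Or.inl (Or.inl (by rw [hNz, hPQz, hcbz])))
  have hcardP := (Multiset.toFinset_card_le P.roots).trans (card_roots' P)
  have hcardc := (Multiset.toFinset_card_le c.roots).trans (card_roots' c)
  have hcard := (Finset.card_le_card hsub).trans ((Finset.card_union_le _ _).trans
    (add_le_add_left (Finset.card_union_le _ _) _))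
  rw [← Finset.card_sdiff_add_card] at hcard
  rw [setOf_eval_eq_mul_eq_roots_sdiff hR hQ, Set.ncard_coe_finset]
  omega

end RootCount

section IteratedDerivNum

noncomputable def iteratedDerivNum {R : Type*} [CommRing R] (p q : R[X]) : ℕ → R[X]
  | 0 => p
  | j + 1 => derivative (iteratedDerivNum p q j) * q -
      C ((j : R) + 1) * iteratedDerivNum p q j * derivative q

theorem iteratedDeriv_eq_eval_iteratedDerivNum_div {𝕜 : Type*} [NontriviallyNormedField 𝕜]
    {p q : 𝕜[X]} {f : 𝕜 → 𝕜} (hf : ∀ z, q.eval z ≠ 0 → f z = p.eval z / q.eval z) (j : ℕ)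
    {z : 𝕜} (hz : q.eval z ≠ 0) :
    iteratedDeriv j f z = (iteratedDerivNum p q j).eval z / q.eval z ^ (j + 1) := by
  induction j generalizing z with
  | zero => simpa [iteratedDerivNum] using hf z hz
  | succ j ih =>
    have hev : iteratedDeriv j f =ᶠ[nhds z]
        fun w => (iteratedDerivNum p q j).eval w / q.eval w ^ (j + 1) :=
      Filter.eventuallyEq_of_mem ((isOpen_compl_singleton.preimage q.continuous).mem_nhds hz)
        fun w hw => ih hw
    have hnum := (iteratedDerivNum p q j).hasDerivAt z
    have hden := (q.hasDerivAt z).fun_pow (j + 1)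
    rw [iteratedDeriv_succ, hev.deriv_eq, (hnum.fun_div hden (pow_ne_zero _ hz)).deriv,
      iteratedDerivNum]
    simp only [eval_sub, eval_mul, eval_C]
    field_simp
    push_cast
    ring

theorem prod_iteratedDeriv_pow_eq_eval_div {𝕜 : Type*} [NontriviallyNormedField 𝕜]
    {p q : 𝕜[X]} {f : 𝕜 → 𝕜} (hf : ∀ z, q.eval z ≠ 0 → f z = p.eval z / q.eval z)
    (s : Finset ℕ) (n : ℕ → ℕ) {z : 𝕜} (hz : q.eval z ≠ 0) :
    ∏ j ∈ s, iteratedDeriv j f z ^ n j =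
      (∏ j ∈ s, iteratedDerivNum p q j ^ n j).eval z /
        q.eval z ^ ∑ j ∈ s, (j + 1) * n j := by
  rw [eval_prod, ← Finset.prod_pow_eq_pow_sum, ← Finset.prod_div_distrib]
  refine Finset.prod_congr rfl fun j _ => ?_
  rw [iteratedDeriv_eq_eval_iteratedDerivNum_div hf j hz, eval_pow, div_pow, ← pow_mul]

variable {R : Type*} [CommRing R]

theorem coeff_derivative_mul_sub_C_mul_mul_derivative {A q : R[X]} {u : ℕ} (m : R)
    (hA : A.natDegree ≤ u) (hq : 0 < q.natDegree) :
    (derivative A * q - C m * A * derivative q).natDegree ≤ u + (q.natDegree - 1) ∧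
      (derivative A * q - C m * A * derivative q).coeff (u + (q.natDegree - 1)) =
        A.coeff u * q.leadingCoeff * (u + q.natDegree - (m + 1) * q.natDegree) := by
  -- `A' q = (A q)' - A q'` spares a case split on whether `A` is constant.
  have hsplit : derivative A * q - C m * A * derivative q =
      derivative (A * q) - C (m + 1) * (A * derivative q) := by
    rw [derivative_mul, C_add, C_1]; ring
  have hidx : u + (q.natDegree - 1) + 1 = u + q.natDegree := by omega
  have hAq : (A * q).natDegree ≤ u + q.natDegree := natDegree_mul_le_of_le hA le_rfl
  have hAq' : (A * derivative q).natDegree ≤ u + (q.natDegree - 1) :=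
    natDegree_mul_le_of_le hA (natDegree_derivative_le q)
  have hAqd : (derivative (A * q)).natDegree ≤ u + (q.natDegree - 1) :=
    (natDegree_derivative_le _).trans (by omega)
  rw [hsplit]
  refine ⟨(natDegree_sub_le_of_le hAqd ((natDegree_C_mul_le _ _).trans hAq')).trans
    (max_self _).le, ?_⟩
  rw [coeff_sub, coeff_C_mul, coeff_derivative, hidx, coeff_mul_add_eq_of_natDegree_le hA le_rfl,
    coeff_mul_add_eq_of_natDegree_le hA (natDegree_derivative_le q), coeff_derivative,
    Nat.sub_add_cancel hq, leadingCoeff]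
  push_cast [hidx, Nat.cast_sub hq]
  ring

variable [IsDomain R] [CharZero R] {c : R} {q : R[X]}

theorem iteratedDerivNum_C_ne_zero_and_natDegree_eq (hc : c ≠ 0) (hq : 0 < q.natDegree)
    (j : ℕ) :
    iteratedDerivNum (C c) q j ≠ 0 ∧
      (iteratedDerivNum (C c) q j).natDegree = j * (q.natDegree - 1) := by
  induction j with
  | zero => simpa [iteratedDerivNum] using hc
  | succ j ih =>
    obtain ⟨hA, hAdeg⟩ := ih
    set d := q.natDegree
    obtain ⟨hle, hcoeff⟩ :=
      coeff_derivative_mul_sub_C_mul_mul_derivative ((j : R) + 1) hAdeg.le hq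
    have hidx : j * (d - 1) + (d - 1) = (j + 1) * (d - 1) := by ring
    -- the factor is `-(j + d)`
    have hfactor : ((j * (d - 1) : ℕ) : R) + d - ((j : R) + 1 + 1) * d ≠ 0 := by
      rw [sub_ne_zero]
      exact_mod_cast (show j * (d - 1) + d ≠ (j + 1 + 1) * d by
        have : j * (d - 1) ≤ j * d := Nat.mul_le_mul_left j (Nat.sub_le d 1)
        nlinarith)
    have hne : (iteratedDerivNum (C c) q (j + 1)).coeff ((j + 1) * (d - 1)) ≠ 0 := by
      have hlcA : (iteratedDerivNum (C c) q j).coeff (j * (d - 1)) ≠ 0 :=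
        hAdeg ▸ leadingCoeff_ne_zero.mpr hA
      rw [iteratedDerivNum, ← hidx, hcoeff]
      exact mul_ne_zero (mul_ne_zero hlcA
        (leadingCoeff_ne_zero.mpr (ne_zero_of_natDegree_gt hq))) hfactor
    refine ⟨fun h => hne (by rw [h, coeff_zero]), natDegree_eq_of_le_of_coeff_ne_zero ?_ hne⟩
    rw [iteratedDerivNum, ← hidx]
    exact hle

theorem natDegree_prod_iteratedDerivNum_C_pow (hc : c ≠ 0) (hq : 0 < q.natDegree)
    (s : Finset ℕ) (n : ℕ → ℕ) :
    (∏ j ∈ s, iteratedDerivNum (C c) q j ^ n j).natDegree =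
      (∑ j ∈ s, j * n j) * (q.natDegree - 1) := by
  rw [natDegree_prod _ _ fun j _ =>
      pow_ne_zero _ (iteratedDerivNum_C_ne_zero_and_natDegree_eq hc hq j).1, Finset.sum_mul]
  refine Finset.sum_congr rfl fun j _ => ?_
  rw [natDegree_pow, (iteratedDerivNum_C_ne_zero_and_natDegree_eq hc hq j).2]
  ring

end IteratedDerivNum

end Polynomial

open Finset in
theorem stmt_17_general (k : ℕ) (n : ℕ → ℕ)
    (hγ1 : 1 ≤ ∑ j ∈ Finset.range (k + 1), n j)
    (Γ : ℕ) (hΓ : Γ = ∑ j ∈ Finset.range (k + 1), (j + 1) * n j)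
    (p q : Polynomial ℂ) (hq : q ≠ 0)
    (hp : ∀ z : ℂ, p.eval z ≠ 0)
    (hnc : ¬∃ c : ℂ, p = Polynomial.C c * q)
    (f : ℂ → ℂ)
    (hf : ∀ z : ℂ, q.eval z ≠ 0 → f z = p.eval z / q.eval z)
    (P : Polynomial ℂ) (hP : P ≠ 0) :
    Γ ≤ Set.ncard {z : ℂ | q.eval z ≠ 0 ∧
      ∏ j ∈ Finset.range (k + 1), (iteratedDeriv j f z) ^ (n j) = P.eval z} := by
  obtain ⟨c, hc, rfl⟩ := exists_eq_C_of_forall_eval_ne_zero hp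
  obtain ⟨e, he⟩ : ∃ e, q.natDegree = e + 1 := by
    refine ⟨q.natDegree - 1, (Nat.succ_pred_eq_of_ne_zero fun h => ?_).symm⟩
    obtain ⟨a, rfl⟩ : ∃ a, q = C a := ⟨_, eq_C_of_natDegree_eq_zero h⟩
    have ha : a ≠ 0 := by rintro rfl; exact hq C_0
    exact hnc ⟨c / a, by rw [← C_mul, div_mul_cancel₀ c ha]⟩
  have hd : 0 < q.natDegree := by omega
  set B := ∏ j ∈ range (k + 1), iteratedDerivNum (C c) q j ^ n j
  have hB : B ≠ 0 := prod_ne_zero_iff.mpr fun j _ =>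
    pow_ne_zero _ (iteratedDerivNum_C_ne_zero_and_natDegree_eq hc hd j).1
  have hBdeg := natDegree_prod_iteratedDerivNum_C_pow hc hd (range (k + 1)) n
  have hΓJ : Γ = ∑ j ∈ range (k + 1), j * n j + ∑ j ∈ range (k + 1), n j := by
    rw [hΓ, ← sum_add_distrib]
    exact sum_congr rfl fun j _ => by ring
  set J := ∑ j ∈ range (k + 1), j * n j
  set m := ∑ j ∈ range (k + 1), n j
  have hΓ0 : Γ ≠ 0 := by rw [hΓJ]; omega
  have hset : {z | q.eval z ≠ 0 ∧ ∏ j ∈ range (k + 1), iteratedDeriv j f z ^ n j = P.eval z} =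
      {z | (q ^ Γ).eval z ≠ 0 ∧ B.eval z = P.eval z * (q ^ Γ).eval z} := Set.ext fun z => by
    simp only [Set.mem_ofPred_eq, eval_pow, pow_ne_zero_iff hΓ0]
    exact and_congr_right fun hz => by
      rw [prod_iteratedDeriv_pow_eq_eval_div hf _ n hz, ← hΓ, div_eq_iff (pow_ne_zero _ hz)]
  have hroots : q.roots.toFinset.card ≤ e + 1 :=
    he ▸ (Multiset.toFinset_card_le _).trans (card_roots' q)
  rw [he, Nat.add_sub_cancel] at hBdeg
  have key := natDegree_lt_ncard_eval_eq_mul_add (Q := q ^ Γ) hB hP (by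
    rw [natDegree_pow, he, hBdeg, hΓJ]
    nlinarith)
  rw [← hset, natDegree_pow, roots_pow, Multiset.toFinset_nsmul _ _ hΓ0, he, hBdeg] at key
  nlinarith

/-- Lemma 2.6: if `f = p/q` is a non-constant rational function without zeros in `ℂ`
(so `p` never vanishes), and `P ≢ 0` is a polynomial, then `M[f] - P` has at least
`Γ_M = ∑ (j+1) n_j` distinct zeros in `ℂ`. -/
theorem stmt_17 (k : ℕ) (hk : 1 ≤ k) (n : ℕ → ℕ)
    (hγ1 : 1 ≤ ∑ j ∈ Finset.range (k + 1), n j)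
    (Γ : ℕ) (hΓ : Γ = ∑ j ∈ Finset.range (k + 1), (j + 1) * n j)
    (p q : Polynomial ℂ) (hq : q ≠ 0)
    (hp : ∀ z : ℂ, p.eval z ≠ 0)
    (hnc : ¬∃ c : ℂ, p = Polynomial.C c * q)
    (f : ℂ → ℂ)
    (hf : ∀ z : ℂ, q.eval z ≠ 0 → f z = p.eval z / q.eval z)
    (P : Polynomial ℂ) (hP : P ≠ 0) :
    Γ ≤ Set.ncard {z : ℂ | q.eval z ≠ 0 ∧
      ∏ j ∈ Finset.range (k + 1), (iteratedDeriv j f z) ^ (n j) = P.eval z} :=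
  stmt_17_general k n hγ1 Γ hΓ p q hq hp hnc f hf P hP
end
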